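/- arXiv:1201.1645 — 8 statements merged into one kernel-verified Lean document; each statement's English description precedes it below -/
import Mathlib

section
/- Every automorphism of sl₂(F) is inner: if σ : L → L is an automorphism of the Lie algebra L = sl₂(F), then there exists an invertible matrix M ∈ Mat₂(F) such that y^σ = M y M⁻¹ for all y ∈ L. -/
/-!
Transport the standard triple `(h, e, f)` of `sl₂` along `σ` to an `sl₂`-triple `(H, E, F)` of
`2 × 2` matrices. Since `2E = [H, E]` is a commutator, `tr E = 0`, and `2 tr (E²) = tr (E [H, E]) = 0`;
a traceless `2 × 2` matrix with `tr (E²) = 0` squares to zero. So `E² = F² = 0`, and then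
`2E = [[E, F], E] = 2EFE`. For `v ≠ 0` in the image of `EF` we get `Ev = 0`, `E(Fv) = v`,
`F(Fv) = 0`, so the matrix `M` with columns `v, Fv` is invertible and conjugates `e, f` to `E, F`.
Both `σ` and conjugation by `M` are Lie homomorphisms, and `e, f, [e, f]` span `sl₂`,
so they agree everywhere.
-/

open Matrix LieAlgebra.SpecialLinear

attribute [local instance] LieRing.ofAssociativeRing LieAlgebra.ofAssociativeAlgebra

lemma LieHom.ext_of_span_lie {R L L' : Type*} [CommRing R] [LieRing L] [LieAlgebra R L]
    [LieRing L'] [LieAlgebra R L'] {φ ψ : L →ₗ⁅R⁆ L'} {e f : L}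
    (hspan : Submodule.span R {e, f, ⁅e, f⁆} = ⊤) (he : φ e = ψ e) (hf : φ f = ψ f) : φ = ψ := by
  have : (φ : L →ₗ[R] L') = ψ := LinearMap.ext_on hspan <| by
    rintro _ (rfl | rfl | rfl) <;> simp [he, hf]
  exact LieHom.ext (LinearMap.congr_fun this)

namespace IsSl2Triple

lemma map {R L L' : Type*} [CommRing R] [LieRing L] [LieAlgebra R L]
    [LieRing L'] [LieAlgebra R L'] {h e f : L} (t : IsSl2Triple h e f) (φ : L →ₗ⁅R⁆ L')
    (hφ : Function.Injective φ) : IsSl2Triple (φ h) (φ e) (φ f) where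
  h_ne_zero := (map_ne_zero_iff φ hφ).mpr t.h_ne_zero
  lie_e_f := by rw [← LieHom.map_lie, t.lie_e_f]
  lie_h_e_nsmul := by rw [← LieHom.map_lie, t.lie_h_e_nsmul, map_nsmul]
  lie_h_f_nsmul := by rw [← LieHom.map_lie, t.lie_h_f_nsmul, map_neg, map_nsmul]

lemma e_mul_f_mul_e {K A : Type*} [Field K] [Ring A] [Module K A] (h2 : (2 : K) ≠ 0)
    {h e f : A} (t : IsSl2Triple h e f) (he : e * e = 0) : e * f * e = e := by
  have key : ⁅⁅e, f⁆, e⁆ = e * f * e + e * f * e := calc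
    ⁅⁅e, f⁆, e⁆ = e * f * e + e * f * e - f * (e * e) - e * e * f := by
      simp only [Ring.lie_def]; noncomm_ring
    _ = e * f * e + e * f * e := by rw [he, mul_zero, zero_mul, sub_zero, sub_zero]
  refine smul_right_injective A h2 (show (2 : K) • _ = (2 : K) • _ from ?_)
  rw [two_smul, two_smul, ← key, t.lie_e_f, t.lie_h_e_nsmul, two_nsmul]

end IsSl2Triple

namespace Matrix

variable {n R : Type*} [Fintype n] [CommRing R]

lemma mul_trace_eq_zero_of_lie_eq_smul {H E : Matrix n n R} {c : R} (h : ⁅H, E⁆ = c • E) :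
    c * trace E = 0 := by
  rw [← smul_eq_mul, ← trace_smul, ← h, LieAlgebra.matrix_trace_commutator_zero]

lemma mul_trace_mul_self_eq_zero_of_lie_eq_smul {H E : Matrix n n R} {c : R}
    (h : ⁅H, E⁆ = c • E) : c * trace (E * E) = 0 := by
  rw [← smul_eq_mul, ← trace_smul, ← mul_smul_comm, ← h, Ring.lie_def, mul_sub, trace_sub,
    ← mul_assoc, ← mul_assoc, trace_mul_cycle E H E, sub_self]

lemma mul_self_eq_zero_of_trace_eq_zero {K : Type*} [Field K] (h2 : (2 : K) ≠ 0)
    {E : Matrix (Fin 2) (Fin 2) K} (h0 : trace E = 0) (h1 : trace (E * E) = 0) : E * E = 0 := by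
  rw [trace_fin_two] at h0
  simp only [trace_fin_two, mul_apply, Fin.sum_univ_two] at h1
  have hdet : E 0 0 * E 0 0 + E 0 1 * E 1 0 = 0 := by
    refine (mul_eq_zero.mp ?_).resolve_left h2
    linear_combination h1 - (E 1 1 - E 0 0) * h0
  ext i j
  fin_cases i <;> fin_cases j <;>
    simp only [mul_apply, Fin.sum_univ_two, zero_apply, Fin.zero_eta, Fin.mk_one]
  · linear_combination hdet
  · linear_combination E 0 1 * h0
  · linear_combination E 1 0 * h0
  · linear_combination hdet + (E 1 1 - E 0 0) * h0

lemma exists_isUnit_mul_eq_mul_single {K : Type*} [Field K] {E F : Matrix (Fin 2) (Fin 2) K}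
    (hE : E ≠ 0) (hEE : E * E = 0) (hFF : F * F = 0) (hEFE : E * F * E = E) :
    ∃ M : Matrix (Fin 2) (Fin 2) K,
      IsUnit M ∧ E * M = M * single 0 1 1 ∧ F * M = M * single 1 0 1 := by
  obtain ⟨u, hu⟩ : ∃ u, (E * F) *ᵥ u ≠ 0 := by
    by_contra! h
    have hEF : E * F = 0 := mulVec_injective (funext fun u => (h u).trans (zero_mulVec u).symm)
    exact hE (by rw [← hEFE, hEF, zero_mul])
  set v := (E * F) *ᵥ u
  have hEv : E *ᵥ v = 0 := by rw [mulVec_mulVec, ← mul_assoc, hEE, zero_mul, zero_mulVec]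
  have hEFv : E *ᵥ (F *ᵥ v) = v := by rw [mulVec_mulVec, mulVec_mulVec, ← mul_assoc, hEFE]
  have hFFv : F *ᵥ (F *ᵥ v) = 0 := by rw [mulVec_mulVec, hFF, zero_mulVec]
  set M := (of ![v, F *ᵥ v])ᵀ
  refine ⟨M, linearIndependent_cols_iff_isUnit.mp ?_, ?_, ?_⟩
  · refine LinearIndependent.pair_iff.mpr fun s t hst => ?_
    have ht := congrArg (E *ᵥ ·) hst
    simp only [mulVec_add, mulVec_smul, hEv, hEFv, smul_zero, zero_add, mulVec_zero] at ht
    obtain rfl : t = 0 := (smul_eq_zero.mp ht).resolve_right hu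
    rw [zero_smul, add_zero] at hst
    exact ⟨(smul_eq_zero.mp hst).resolve_right hu, rfl⟩
  -- the columns of `A * M` are `A *ᵥ v` and `A *ᵥ (F *ᵥ v)`, definitionally
  · ext i j
    fin_cases j
    · change (E *ᵥ v) i = _
      rw [hEv]
      simp [M]
    · change (E *ᵥ (F *ᵥ v)) i = _
      rw [hEFv]
      simp [M]
  · ext i j
    fin_cases j
    · change (F *ᵥ v) i = _
      simp [M]
    · change (F *ᵥ (F *ᵥ v)) i = _
      rw [hFFv]
      simp [M]

end Matrix

lemma IsSl2Triple.e_mul_e_eq_zero_of_fin_two {K : Type*} [Field K] (h2 : (2 : K) ≠ 0)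
    {H E F : Matrix (Fin 2) (Fin 2) K} (t : IsSl2Triple H E F) : E * E = 0 :=
  have hHE := t.lie_h_e_smul K
  mul_self_eq_zero_of_trace_eq_zero h2
    ((mul_eq_zero.mp (mul_trace_eq_zero_of_lie_eq_smul hHE)).resolve_left h2)
    ((mul_eq_zero.mp (mul_trace_mul_self_eq_zero_of_lie_eq_smul hHE)).resolve_left h2)

namespace LieAlgebra.SpecialLinear

variable (R : Type*) [CommRing R]

def sl2e : sl (Fin 2) R := single 0 1 zero_ne_one 1

def sl2f : sl (Fin 2) R := single 1 0 one_ne_zero 1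

def sl2h : sl (Fin 2) R := singleSubSingle 0 1 1

@[simp]
lemma coe_sl2e : (sl2e R : Matrix (Fin 2) (Fin 2) R) = Matrix.single 0 1 1 := rfl

@[simp]
lemma coe_sl2f : (sl2f R : Matrix (Fin 2) (Fin 2) R) = Matrix.single 1 0 1 := rfl

@[simp]
lemma coe_sl2h :
    (sl2h R : Matrix (Fin 2) (Fin 2) R) = Matrix.single 0 0 1 - Matrix.single 1 1 1 := rfl

lemma isSl2Triple_sl2h_sl2e_sl2f [Nontrivial R] : IsSl2Triple (sl2h R) (sl2e R) (sl2f R) where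
  h_ne_zero h := by simpa using congrArg (fun y : sl (Fin 2) R => y.1 0 0) h
  lie_e_f := by ext i j; fin_cases i <;> fin_cases j <;> simp [Ring.lie_def]
  lie_h_e_nsmul := by ext i j; fin_cases i <;> fin_cases j <;> norm_num [Ring.lie_def]
  lie_h_f_nsmul := by ext i j; fin_cases i <;> fin_cases j <;> norm_num [Ring.lie_def]

lemma span_sl2e_sl2f_lie : Submodule.span R {sl2e R, sl2f R, ⁅sl2e R, sl2f R⁆} = ⊤ := by
  refine eq_top_iff.mpr fun y _ => Submodule.mem_span_triple.mpr ⟨y.1 0 1, y.1 1 0, y.1 0 0, ?_⟩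
  have ht : y.1 1 1 = -y.1 0 0 := eq_neg_of_add_eq_zero_right ((trace_fin_two _).symm.trans y.2)
  ext i j
  fin_cases i <;> fin_cases j <;> simp [Ring.lie_def, ht]

end LieAlgebra.SpecialLinear

theorem stmt0_general (F : Type*) [Field F] (hchar : (2 : F) ≠ 0)
    (σ : sl (Fin 2) F ≃ₗ[F] sl (Fin 2) F)
    (hσ : ∀ y z : sl (Fin 2) F, σ ⁅y, z⁆ = ⁅σ y, σ z⁆) :
    ∃ M : Matrix (Fin 2) (Fin 2) F, IsUnit M ∧
      ∀ y : sl (Fin 2) F,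
        ((σ y : Matrix (Fin 2) (Fin 2) F)) = M * (y : Matrix (Fin 2) (Fin 2) F) * M⁻¹ := by
  let φ : sl (Fin 2) F →ₗ⁅F⁆ Matrix (Fin 2) (Fin 2) F :=
    (sl (Fin 2) F).incl.comp { σ.toLinearMap with map_lie' := hσ _ _ }
  have t := (isSl2Triple_sl2h_sl2e_sl2f F).map φ (Subtype.val_injective.comp σ.injective)
  have hEE := t.e_mul_e_eq_zero_of_fin_two hchar
  obtain ⟨M, hM, hE, hF⟩ := exists_isUnit_mul_eq_mul_single t.e_ne_zero hEE
    (t.symm.e_mul_e_eq_zero_of_fin_two hchar) (t.e_mul_f_mul_e hchar hEE)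
  have hdet := (isUnit_iff_isUnit_det M).mp hM
  let ψ := (M.lieConj hM.invertible).toLieHom.comp (sl (Fin 2) F).incl
  have hψ (y : sl (Fin 2) F) : ψ y = M * y * M⁻¹ := lieConj_apply _ _ _
  have hφψ : φ = ψ := by
    refine LieHom.ext_of_span_lie (span_sl2e_sl2f_lie F) ?_ ?_
    · rw [hψ, coe_sl2e, ← hE, mul_nonsing_inv_cancel_right _ _ hdet]
    · rw [hψ, coe_sl2f, ← hF, mul_nonsing_inv_cancel_right _ _ hdet]
  exact ⟨M, hM, fun y => (LieHom.congr_fun hφψ y).trans (hψ y)⟩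

/-- Every automorphism of `sl₂(F)` is inner: if `σ` is an automorphism of the Lie algebra
`L = sl₂(F)` (an `F`-linear bijection preserving the bracket), then there is an invertible
matrix `M ∈ Mat₂(F)` with `σ y = M y M⁻¹` for all `y ∈ L`. -/
theorem stmt0 (F : Type*) [Field F] [IsAlgClosed F] (hchar : (2 : F) ≠ 0)
    (σ : sl (Fin 2) F ≃ₗ[F] sl (Fin 2) F)
    (hσ : ∀ y z : sl (Fin 2) F, σ ⁅y, z⁆ = ⁅σ y, σ z⁆) :
    ∃ M : Matrix (Fin 2) (Fin 2) F, IsUnit M ∧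
      ∀ y : sl (Fin 2) F,
        ((σ y : Matrix (Fin 2) (Fin 2) F)) = M * (y : Matrix (Fin 2) (Fin 2) F) * M⁻¹ :=
  stmt0_general F hchar σ hσ
end

section
/- Let a, a* be normalized semisimple elements of L = sl₂(F) and define p ∈ F by ⟨a,a*⟩ = 1 − 2p. Then ⟨a,[a,a*]⟩ = 0, ⟨a*,[a,a*]⟩ = 0, and ⟨[a,a*],[a,a*]⟩ = −16p(1−p); consequently the Gram matrix of ⟨·,·⟩ with respect to the triple (a, a*, [a,a*]) has determinant −64p²(1−p)². -/
open Matrix LieAlgebra.SpecialLinear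

/-- An endomorphism of a vector space is diagonalizable when its eigenspaces span. -/
def IsDiagonalizable {F M : Type*} [Field F] [AddCommGroup M] [Module F M]
    (f : Module.End F M) : Prop :=
  (⨆ μ : F, f.eigenspace μ) = ⊤

/-- The bilinear form `⟨y,z⟩ = tr(yz)/2` on `2×2` matrices (one eighth of the Killing form
of `sl₂`). -/
noncomputable def slForm {F : Type*} [Field F]
    (y z : Matrix (Fin 2) (Fin 2) F) : F :=
  Matrix.trace (y * z) / 2

lemma slForm_expand {F : Type*} [Field F] (y z : Matrix (Fin 2) (Fin 2) F) :
    slForm y z = (y 0 0 * z 0 0 + y 0 1 * z 1 0 + (y 1 0 * z 0 1 + y 1 1 * z 1 1)) / 2 := by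
  rw [slForm, Matrix.trace_fin_two]
  simp [Matrix.mul_apply, Fin.sum_univ_two]

lemma slForm_comm {F : Type*} [Field F] (y z : Matrix (Fin 2) (Fin 2) F) :
    slForm y z = slForm z y := by
  unfold slForm
  rw [Matrix.trace_mul_comm]

/-- Let `a, a*` be normalized semisimple elements of `L = sl₂(F)` and define `p` by
`⟨a,a*⟩ = 1 − 2p`.  Then `⟨a,[a,a*]⟩ = 0`, `⟨a*,[a,a*]⟩ = 0`,
`⟨[a,a*],[a,a*]⟩ = −16p(1−p)`, and the Gram matrix of `⟨·,·⟩` with respect to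
`(a, a*, [a,a*])` has determinant `−64 p² (1−p)²`. -/
theorem stmt5 (F : Type*) [Field F] [IsAlgClosed F] (hchar : (2 : F) ≠ 0)
    (a as : sl (Fin 2) F)
    (ha : IsDiagonalizable (LieAlgebra.ad F (sl (Fin 2) F) a))
    (has : IsDiagonalizable (LieAlgebra.ad F (sl (Fin 2) F) as))
    (hna : slForm (a : Matrix (Fin 2) (Fin 2) F) (a : Matrix (Fin 2) (Fin 2) F) = 1)
    (hnas : slForm (as : Matrix (Fin 2) (Fin 2) F) (as : Matrix (Fin 2) (Fin 2) F) = 1)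
    (p : F)
    (hp : slForm (a : Matrix (Fin 2) (Fin 2) F) (as : Matrix (Fin 2) (Fin 2) F) = 1 - 2 * p) :
    slForm (a : Matrix (Fin 2) (Fin 2) F) ⁅(a : Matrix (Fin 2) (Fin 2) F), (as : Matrix (Fin 2) (Fin 2) F)⁆ = 0 ∧
    slForm (as : Matrix (Fin 2) (Fin 2) F) ⁅(a : Matrix (Fin 2) (Fin 2) F), (as : Matrix (Fin 2) (Fin 2) F)⁆ = 0 ∧
    slForm ⁅(a : Matrix (Fin 2) (Fin 2) F), (as : Matrix (Fin 2) (Fin 2) F)⁆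
           ⁅(a : Matrix (Fin 2) (Fin 2) F), (as : Matrix (Fin 2) (Fin 2) F)⁆ = -16 * p * (1 - p) ∧
    (Matrix.of fun i j : Fin 3 =>
        slForm (![(a : Matrix (Fin 2) (Fin 2) F), (as : Matrix (Fin 2) (Fin 2) F),
                  ⁅(a : Matrix (Fin 2) (Fin 2) F), (as : Matrix (Fin 2) (Fin 2) F)⁆] i)
               (![(a : Matrix (Fin 2) (Fin 2) F), (as : Matrix (Fin 2) (Fin 2) F),
                  ⁅(a : Matrix (Fin 2) (Fin 2) F), (as : Matrix (Fin 2) (Fin 2) F)⁆] j)).det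
      = -64 * p ^ 2 * (1 - p) ^ 2 := by
  set A : Matrix (Fin 2) (Fin 2) F := (a : Matrix (Fin 2) (Fin 2) F) with hAdef
  set B : Matrix (Fin 2) (Fin 2) F := (as : Matrix (Fin 2) (Fin 2) F) with hBdef
  have htrA : A 0 0 + A 1 1 = 0 := by
    have h : Matrix.trace A = 0 := a.2
    rwa [Matrix.trace_fin_two] at h
  have htrB : B 0 0 + B 1 1 = 0 := by
    have h : Matrix.trace B = 0 := as.2
    rwa [Matrix.trace_fin_two] at h
  have hA11 : A 1 1 = -A 0 0 := by linear_combination htrA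
  have hB11 : B 1 1 = -B 0 0 := by linear_combination htrB
  have hbr : ⁅A, B⁆ = A * B - B * A := rfl
  -- scaled versions of the hypotheses, avoiding division
  have e1 : A 0 0 * A 0 0 + A 0 1 * A 1 0 + (A 1 0 * A 0 1 + A 1 1 * A 1 1) = 1 * 2 := by
    have h := hna
    rw [slForm_expand, div_eq_iff hchar] at h
    exact h
  have e2 : B 0 0 * B 0 0 + B 0 1 * B 1 0 + (B 1 0 * B 0 1 + B 1 1 * B 1 1) = 1 * 2 := by
    have h := hnas
    rw [slForm_expand, div_eq_iff hchar] at h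
    exact h
  have e3 : A 0 0 * B 0 0 + A 0 1 * B 1 0 + (A 1 0 * B 0 1 + A 1 1 * B 1 1) = (1 - 2 * p) * 2 := by
    have h := hp
    rw [slForm_expand, div_eq_iff hchar] at h
    exact h
  rw [hA11] at e1
  rw [hB11] at e2
  rw [hA11, hB11] at e3
  have h1 : slForm A ⁅A, B⁆ = 0 := by
    rw [hbr, slForm_expand, div_eq_iff hchar]
    simp only [Matrix.sub_apply, Matrix.mul_apply, Fin.sum_univ_two]
    ring
  have h2 : slForm B ⁅A, B⁆ = 0 := by
    rw [hbr, slForm_expand, div_eq_iff hchar]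
    simp only [Matrix.sub_apply, Matrix.mul_apply, Fin.sum_univ_two]
    ring
  have h3 : slForm ⁅A, B⁆ ⁅A, B⁆ = -16 * p * (1 - p) := by
    rw [hbr, slForm_expand, div_eq_iff hchar]
    simp only [Matrix.sub_apply, Matrix.mul_apply, Fin.sum_univ_two]
    rw [hA11, hB11]
    linear_combination
      2 * (2 * (A 0 0 * B 0 0) + A 0 1 * B 1 0 + A 1 0 * B 0 1 + 2 - 4 * p) * e3
      - 4 * (B 0 0 ^ 2 + B 0 1 * B 1 0) * e1 - 4 * e2
  refine ⟨h1, h2, h3, ?_⟩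
  have h1' : slForm ⁅A, B⁆ A = 0 := by rw [slForm_comm]; exact h1
  have h2' : slForm ⁅A, B⁆ B = 0 := by rw [slForm_comm]; exact h2
  have hsym : slForm B A = 1 - 2 * p := by rw [slForm_comm]; exact hp
  rw [Matrix.det_fin_three]
  simp only [Matrix.of_apply, Matrix.cons_val', Matrix.cons_val_zero, Matrix.cons_val_one,
    Matrix.head_cons, Matrix.cons_val_two, Matrix.tail_cons, Matrix.empty_val',
    Matrix.cons_val_fin_one, Matrix.head_fin_const]
  rw [hna, hnas, hp, hsym, h1, h2, h1', h2', h3]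
  ring
end

section
/- Let a, a* be normalized semisimple elements of L = sl₂(F) and define p ∈ F by ⟨a,a*⟩ = 1 − 2p. Then a, a* satisfy the relations [a,[a,a*]] = 4(2p−1)a + 4a* and [a*,[a*,a]] = 4(2p−1)a* + 4a. -/
open Matrix LieAlgebra.SpecialLinear

lemma sl_trace_zero {F : Type*} [Field F] (a : sl (Fin 2) F) :
    (a : Matrix (Fin 2) (Fin 2) F) 0 0 + (a : Matrix (Fin 2) (Fin 2) F) 1 1 = 0 := by
  have := a.2
  have h : Matrix.trace (a : Matrix (Fin 2) (Fin 2) F) = 0 := a.2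
  simpa [Matrix.trace, Fin.sum_univ_two] using h

lemma key {F : Type*} [Field F] (hchar : (2 : F) ≠ 0)
    (A B : Matrix (Fin 2) (Fin 2) F)
    (tA : A 0 0 + A 1 1 = 0) (tB : B 0 0 + B 1 1 = 0)
    (hna : slForm A A = 1) (p : F) (hp : slForm A B = 1 - 2 * p) :
    A * (A * B - B * A) - (A * B - B * A) * A =
      (4 * (2 * p - 1)) • A + (4 : F) • B := by
  have hna' : Matrix.trace (A * A) = 2 := by
    unfold slForm at hna
    field_simp at hna; linear_combination hna
  have hp' : Matrix.trace (A * B) = 2 * (1 - 2 * p) := by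
    unfold slForm at hp
    field_simp at hp; linear_combination hp
  simp only [Matrix.trace, Fin.sum_univ_two, Matrix.diag, Matrix.mul_apply] at hna' hp'
  have hA11 : A 1 1 = -A 0 0 := by linear_combination tA
  have hB11 : B 1 1 = -B 0 0 := by linear_combination tB
  rw [hA11] at hna' hp'
  rw [hB11] at hp'
  ext i j
  fin_cases i <;> fin_cases j <;>
    simp only [Matrix.sub_apply, Matrix.mul_apply, Fin.sum_univ_two, Matrix.smul_apply,
      Matrix.add_apply, smul_eq_mul, Fin.isValue, Fin.mk_zero, Fin.mk_one, hA11, hB11]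
  · linear_combination (-2 * A 0 0) * hp' + (2 * B 0 0) * hna'
  · linear_combination (-2 * A 0 1) * hp' + (2 * B 0 1) * hna'
  · linear_combination (-2 * A 1 0) * hp' + (2 * B 1 0) * hna'
  · linear_combination (2 * A 0 0) * hp' + (-2 * B 0 0) * hna'

/-- Let `a, a*` be normalized semisimple elements of `L = sl₂(F)` and define `p` by
`⟨a,a*⟩ = 1 − 2p`.  Then `[a,[a,a*]] = 4(2p−1)a + 4a*` and
`[a*,[a*,a]] = 4(2p−1)a* + 4a`. -/
theorem stmt8 (F : Type*) [Field F] [IsAlgClosed F] (hchar : (2 : F) ≠ 0)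
    (a as : sl (Fin 2) F)
    (ha : IsDiagonalizable (LieAlgebra.ad F (sl (Fin 2) F) a))
    (has : IsDiagonalizable (LieAlgebra.ad F (sl (Fin 2) F) as))
    (hna : slForm (a : Matrix (Fin 2) (Fin 2) F) (a : Matrix (Fin 2) (Fin 2) F) = 1)
    (hnas : slForm (as : Matrix (Fin 2) (Fin 2) F) (as : Matrix (Fin 2) (Fin 2) F) = 1)
    (p : F)
    (hp : slForm (a : Matrix (Fin 2) (Fin 2) F) (as : Matrix (Fin 2) (Fin 2) F) = 1 - 2 * p) :
    ⁅a, ⁅a, as⁆⁆ = (4 * (2 * p - 1)) • a + (4 : F) • as ∧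
    ⁅as, ⁅as, a⁆⁆ = (4 * (2 * p - 1)) • as + (4 : F) • a := by
  have hp' : slForm (as : Matrix (Fin 2) (Fin 2) F) (a : Matrix (Fin 2) (Fin 2) F)
      = 1 - 2 * p := by
    unfold slForm at hp ⊢
    rw [Matrix.trace_mul_comm]; exact hp
  constructor <;> [skip; skip] <;>
  · apply Subtype.ext
    show _ = ((4 * (2 * p - 1)) • _ + (4:F) • _ : sl (Fin 2) F).val
    push_cast [sl_bracket]
    first
    | exact key hchar _ _ (sl_trace_zero a) (sl_trace_zero as) hna p hp
    | exact key hchar _ _ (sl_trace_zero as) (sl_trace_zero a) hnas p hp'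
end

section
/- Fix p ∈ F with p ≠ 0 and p ≠ 1. Let 𝓛 denote the quotient of the free Lie algebra over F on two generators u, v by the Lie ideal generated by the elements [u,[u,v]] − 4(2p−1)u − 4v and [v,[v,u]] − 4(2p−1)v − 4u. Then 𝓛 is isomorphic to sl₂(F) as a Lie algebra over F. -/
open Matrix LieAlgebra.SpecialLinear FreeLieAlgebra

/-!
In `sl₂` take `U = !![1, 0; 0, -1]` and `V = !![1 - 2p, 1; 4p(1 - p), 2p - 1]`. A direct computation
shows that `U, V` satisfy both defining relations, so `u ↦ U, v ↦ V` is a morphism from the free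
Lie algebra whose kernel contains the ideal. Conversely, the relations say that `[u, [u, v]]` and
`[v, [v, u]]` lie in `span {u, v}`, so modulo the ideal `span {u, v, [u, v]}` is closed under
brackets and hence is everything. Since `U, V, [U, V]` are linearly independent when
`2 p (1 - p) ≠ 0`, they form a basis of the three-dimensional `sl₂`: the morphism is onto and its
kernel is exactly the ideal.
-/

theorem LinearMap.ker_le_of_linearIndependent_comp {R M N ι : Type*} [Ring R] [AddCommGroup M]
    [Module R M] [AddCommGroup N] [Module R N] [Fintype ι] (f : M →ₗ[R] N) {p : Submodule R M}
    (hp : p ≤ ker f) {b : ι → M} (hb : Submodule.span R (Set.range (p.mkQ ∘ b)) = ⊤)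
    (hfb : LinearIndependent R (f ∘ b)) : ker f ≤ p := by
  intro x hx
  have hxspan : p.mkQ x ∈ Submodule.span R (Set.range (p.mkQ ∘ b)) := hb ▸ Submodule.mem_top
  obtain ⟨c, hc⟩ := (Submodule.mem_span_range_iff_exists_fun R).mp hxspan
  have hxc : x - ∑ i, c i • b i ∈ p := by
    rw [← Submodule.Quotient.mk_eq_zero, ← Submodule.mkQ_apply, map_sub, map_sum, ← hc]
    simp
  have hc0 : ∑ i, c i • f (b i) = 0 := by
    simpa [sub_eq_zero, mem_ker.mp hx, eq_comm] using hp hxc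
  simpa [Fintype.linearIndependent_iff.mp hfb c hc0] using hxc

section LieAlgebra

variable {R L : Type*} [CommRing R] [LieRing L] [LieAlgebra R L]

open Submodule in
theorem LieSubalgebra.lie_mem_span_of_forall_lie_mem {s : Set L}
    (hs : ∀ x ∈ s, ∀ y ∈ s, ⁅x, y⁆ ∈ span R s) {x y : L} (hx : x ∈ span R s)
    (hy : y ∈ span R s) : ⁅x, y⁆ ∈ span R s := by
  induction hx, hy using span_induction₂ with
  | mem_mem x y hx hy => exact hs x hx y hy
  | zero_left y hy => simp
  | zero_right x hx => simp
  | add_left x y z _ _ _ hx hy => simpa using add_mem hx hy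
  | add_right x y z _ _ _ hx hy => simpa using add_mem hx hy
  | smul_left r x y _ _ h => simpa using smul_mem _ r h
  | smul_right r x y _ _ h => simpa using smul_mem _ r h

open Submodule in
theorem LieSubalgebra.coe_lieSpan_pair_eq_span {x y : L} (hx : ⁅x, ⁅x, y⁆⁆ ∈ span R {x, y})
    (hy : ⁅y, ⁅y, x⁆⁆ ∈ span R {x, y}) :
    (lieSpan R L {x, y} : Submodule R L) = span R {x, y, ⁅x, y⁆} := by
  have hsub : span R {x, y} ≤ span R {x, y, ⁅x, y⁆} :=
    span_mono (Set.insert_subset_insert (Set.singleton_subset_iff.mpr (by simp)))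
  have hw : ⁅x, y⁆ ∈ span R {x, y, ⁅x, y⁆} := subset_span (by simp)
  have hxw : ⁅x, ⁅x, y⁆⁆ ∈ span R {x, y, ⁅x, y⁆} := hsub hx
  have hyw : ⁅y, ⁅x, y⁆⁆ ∈ span R {x, y, ⁅x, y⁆} := by
    have h := neg_mem (hsub hy)
    rwa [← lie_neg, lie_skew] at h
  have hlie : ∀ a ∈ ({x, y, ⁅x, y⁆} : Set L), ∀ b ∈ ({x, y, ⁅x, y⁆} : Set L),
      ⁅a, b⁆ ∈ span R {x, y, ⁅x, y⁆} := by
    intro a ha b hb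
    simp only [Set.mem_insert_iff, Set.mem_singleton_iff] at ha hb
    rcases ha with ha | ha | ha <;> rcases hb with hb | hb | hb <;> rw [ha, hb]
    all_goals first
      | rw [lie_self]; exact zero_mem _
      | exact hw
      | exact hxw
      | exact hyw
      | rw [← neg_mem_iff, lie_skew]; first | exact hw | exact hxw | exact hyw
  refine le_antisymm ?_ ?_
  · let K : LieSubalgebra R L :=
      { span R {x, y, ⁅x, y⁆} with lie_mem' := lie_mem_span_of_forall_lie_mem hlie }
    have hK : lieSpan R L {x, y} ≤ K := lieSpan_le.mpr (subset_span.trans hsub)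
    exact hK
  · have hx' : x ∈ lieSpan R L {x, y} := subset_lieSpan (by simp)
    have hy' : y ∈ lieSpan R L {x, y} := subset_lieSpan (by simp)
    rw [span_le]
    exact Set.insert_subset_iff.mpr ⟨hx', Set.insert_subset_iff.mpr
      ⟨hy', Set.singleton_subset_iff.mpr (LieSubalgebra.lie_mem _ hx' hy')⟩⟩

noncomputable def LieHom.quotKerEquivOfSurjective {L' : Type*} [LieRing L'] [LieAlgebra R L']
    (f : L →ₗ⁅R⁆ L') (hf : Function.Surjective f) : (L ⧸ f.ker) ≃ₗ⁅R⁆ L' :=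
  f.quotKerEquivRange.trans <|
    (LieEquiv.ofEq _ _ (congrArg SetLike.coe (f.range_eq_top.mpr hf))).trans
      LieSubalgebra.topEquiv

namespace LieIdeal.Quotient

def mkHom (I : LieIdeal R L) : L →ₗ⁅R⁆ L ⧸ I where
  toFun := LieSubmodule.Quotient.mk
  map_add' _ _ := rfl
  map_smul' _ _ := rfl
  map_lie' := rfl

theorem mkHom_surjective (I : LieIdeal R L) : Function.Surjective (mkHom I) :=
  Quot.mk_surjective

theorem mkHom_eq_zero {I : LieIdeal R L} {x : L} : mkHom I x = 0 ↔ x ∈ I :=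
  LieSubmodule.Quotient.mk_eq_zero'

end LieIdeal.Quotient

theorem FreeLieAlgebra.range_le_of_forall_of_mem {X : Type*} (f : FreeLieAlgebra R X →ₗ⁅R⁆ L)
    {S : LieSubalgebra R L} (h : ∀ x, f (of R x) ∈ S) : f.range ≤ S := by
  have hf : S.incl.comp (lift R fun x => ⟨f (of R x), h x⟩) = f :=
    hom_ext fun x => by simp [lift_of_apply]
  rintro _ ⟨t, rfl⟩
  rw [← hf]
  exact Subtype.prop _

end LieAlgebra

namespace LieAlgebra.SpecialLinear

variable {R : Type*} [CommRing R]

def sl2Mk (a b c : R) : sl (Fin 2) R :=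
  ⟨!![a, b; c, -a], LinearMap.mem_ker.mpr <| by simp [Matrix.trace_fin_two]⟩

@[simp]
theorem val_sl2Mk (a b c : R) : (sl2Mk a b c).val = !![a, b; c, -a] := rfl

theorem eq_sl2Mk (A : sl (Fin 2) R) : A = sl2Mk (A.val 0 0) (A.val 0 1) (A.val 1 0) := by
  have htr : Matrix.trace A.val = 0 := A.2
  rw [Matrix.trace_fin_two] at htr
  ext i j; fin_cases i <;> fin_cases j <;> simp; linear_combination htr

theorem sl2Mk_eq_zero {a b c : R} : sl2Mk a b c = 0 ↔ a = 0 ∧ b = 0 ∧ c = 0 := by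
  rw [Subtype.ext_iff]
  simp [← Matrix.ext_iff, Fin.forall_fin_two]
  tauto

theorem sl2Mk_add (a b c a' b' c' : R) :
    sl2Mk a b c + sl2Mk a' b' c' = sl2Mk (a + a') (b + b') (c + c') := by
  ext i j; fin_cases i <;> fin_cases j <;> simp; ring

theorem smul_sl2Mk (t a b c : R) : t • sl2Mk a b c = sl2Mk (t * a) (t * b) (t * c) := by
  ext i j; fin_cases i <;> fin_cases j <;> simp

theorem lie_sl2Mk (a b c a' b' c' : R) :
    ⁅sl2Mk a b c, sl2Mk a' b' c'⁆ =
      sl2Mk (b * c' - c * b') (2 * (a * b' - b * a')) (2 * (c * a' - a * c')) := by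
  rw [Subtype.ext_iff, sl_bracket]
  ext i j; fin_cases i <;> fin_cases j <;> simp <;> ring

def sl2Equiv : (Fin 3 → R) ≃ₗ[R] sl (Fin 2) R where
  toFun c := sl2Mk (c 0) (c 1) (c 2)
  invFun A := ![A.val 0 0, A.val 0 1, A.val 1 0]
  map_add' c d := (sl2Mk_add ..).symm
  map_smul' t c := (smul_sl2Mk ..).symm
  left_inv c := by ext i; fin_cases i <;> rfl
  right_inv A := (eq_sl2Mk A).symm

theorem finrank_sl_two [Nontrivial R] : Module.finrank R (sl (Fin 2) R) = 3 := by
  rw [← sl2Equiv.finrank_eq, Module.finrank_fin_fun]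

variable (R) in
def sl2U : sl (Fin 2) R := sl2Mk 1 0 0

def sl2V (p : R) : sl (Fin 2) R := sl2Mk (1 - 2 * p) 1 (4 * p * (1 - p))

theorem lie_sl2U_sl2V (p : R) : ⁅sl2U R, sl2V p⁆ = sl2Mk 0 2 (-(8 * p * (1 - p))) := by
  rw [sl2U, sl2V, lie_sl2Mk]; congr 1 <;> ring

theorem lie_sl2U_lie_sl2U_sl2V (p : R) :
    ⁅sl2U R, ⁅sl2U R, sl2V p⁆⁆ = (4 * (2 * p - 1)) • sl2U R + (4 : R) • sl2V p := by
  simp only [sl2U, sl2V, lie_sl2Mk, smul_sl2Mk, sl2Mk_add]; congr 1 <;> ring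

theorem lie_sl2V_lie_sl2V_sl2U (p : R) :
    ⁅sl2V p, ⁅sl2V p, sl2U R⁆⁆ = (4 * (2 * p - 1)) • sl2V p + (4 : R) • sl2U R := by
  simp only [sl2U, sl2V, lie_sl2Mk, smul_sl2Mk, sl2Mk_add]; congr 1 <;> ring

theorem linearIndependent_sl2U_sl2V {F : Type*} [Field F] {p : F} (h2 : (2 : F) ≠ 0)
    (hp0 : p ≠ 0) (hp1 : p ≠ 1) : LinearIndependent F ![sl2U F, sl2V p, ⁅sl2U F, sl2V p⁆] := by
  rw [Fintype.linearIndependent_iff]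
  intro g hg
  simp only [Fin.sum_univ_three, Matrix.cons_val_zero, Matrix.cons_val_one, Matrix.cons_val_two,
    Matrix.vecHead, Matrix.vecTail, Function.comp_apply, Fin.succ_zero_eq_one, lie_sl2U_sl2V] at hg
  simp only [sl2U, sl2V, smul_sl2Mk, sl2Mk_add, sl2Mk_eq_zero] at hg
  obtain ⟨h00, h01, h10⟩ := hg
  have hk : 4 * p * (1 - p) ≠ 0 := by
    have h4 : (4 : F) = 2 * 2 := by norm_num
    exact mul_ne_zero (mul_ne_zero (h4 ▸ mul_ne_zero h2 h2) hp0) (sub_ne_zero.mpr hp1.symm)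
  have h12 : g 1 - 2 * g 2 = 0 := by
    have h : 4 * p * (1 - p) * (g 1 - 2 * g 2) = 0 := by linear_combination h10
    exact (mul_eq_zero.mp h).resolve_left hk
  have hg2 : g 2 = 0 := by
    have h : 2 * (2 * g 2) = 0 := by linear_combination h01 - h12
    simpa [h2] using h
  have hg1 : g 1 = 0 := by linear_combination h12 + 2 * hg2
  have hg0 : g 0 = 0 := by linear_combination h00 - (1 - 2 * p) * hg1
  intro i
  fin_cases i <;> assumption

end LieAlgebra.SpecialLinear

namespace FreeLieAlgebra

section CommRing

variable {R : Type*} [CommRing R]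

def relators (a b : R) : Set (FreeLieAlgebra R (Fin 2)) :=
  {⁅of R (0 : Fin 2), ⁅of R (0 : Fin 2), of R (1 : Fin 2)⁆⁆ - a • of R 0 - b • of R 1,
   ⁅of R (1 : Fin 2), ⁅of R (1 : Fin 2), of R (0 : Fin 2)⁆⁆ - a • of R 1 - b • of R 0}

open LieIdeal.Quotient Submodule in
theorem span_mkHom_eq_top_of_relators_subset {a b : R}
    {I : LieIdeal R (FreeLieAlgebra R (Fin 2))} (hI : relators a b ⊆ I) :
    span R (Set.range (mkHom I ∘
      ![of R (0 : Fin 2), of R 1, ⁅of R (0 : Fin 2), of R (1 : Fin 2)⁆])) = ⊤ := by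
  set x := mkHom I (of R (0 : Fin 2))
  set y := mkHom I (of R (1 : Fin 2))
  have hrel {z w : _ ⧸ I} (h : ⁅z, ⁅z, w⁆⁆ - a • z - b • w = 0) :
      ⁅z, ⁅z, w⁆⁆ ∈ span R {z, w} := by
    rw [sub_sub, sub_eq_zero] at h
    rw [h]
    exact add_mem (smul_mem _ _ (subset_span (by simp))) (smul_mem _ _ (subset_span (by simp)))
  have hx : ⁅x, ⁅x, y⁆⁆ ∈ span R {x, y} := by
    have h := mkHom_eq_zero.mpr (hI (Set.mem_insert _ _))
    rw [map_sub, map_sub, map_smul, map_smul, LieHom.map_lie, LieHom.map_lie] at h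
    exact hrel h
  have hy : ⁅y, ⁅y, x⁆⁆ ∈ span R {x, y} := by
    have h := mkHom_eq_zero.mpr (hI (Set.mem_insert_of_mem _ rfl))
    rw [map_sub, map_sub, map_smul, map_smul, LieHom.map_lie, LieHom.map_lie] at h
    exact Set.pair_comm x y ▸ hrel h
  have hgen : LieSubalgebra.lieSpan R _ {x, y} = ⊤ := by
    rw [eq_top_iff, ← (mkHom I).range_eq_top.mpr (mkHom_surjective I)]
    refine range_le_of_forall_of_mem _ fun i => ?_
    fin_cases i <;> exact LieSubalgebra.subset_lieSpan (by simp [x, y])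
  calc span R (Set.range (mkHom I ∘
        ![of R (0 : Fin 2), of R 1, ⁅of R (0 : Fin 2), of R (1 : Fin 2)⁆]))
      = span R {x, y, ⁅x, y⁆} := by
        congr 1; ext z; simp [x, y, Fin.exists_fin_succ, eq_comm]
    _ = ⊤ := by rw [← LieSubalgebra.coe_lieSpan_pair_eq_span hx hy, hgen]; rfl

noncomputable def toSl2 (p : R) : FreeLieAlgebra R (Fin 2) →ₗ⁅R⁆ sl (Fin 2) R :=
  lift R ![sl2U R, sl2V p]

theorem toSl2_comp_eq (p : R) :
    toSl2 p ∘ ![of R (0 : Fin 2), of R 1, ⁅of R (0 : Fin 2), of R (1 : Fin 2)⁆] =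
      ![sl2U R, sl2V p, ⁅sl2U R, sl2V p⁆] := by
  funext i
  fin_cases i <;> simp [toSl2, lift_of_apply]

theorem relators_subset_ker_toSl2 (p : R) : relators (4 * (2 * p - 1)) 4 ⊆ (toSl2 p).ker := by
  have h0 : toSl2 p (of R 0) = sl2U R := lift_of_apply _ _
  have h1 : toSl2 p (of R 1) = sl2V p := lift_of_apply _ _
  rintro z (rfl | rfl) <;>
    simp only [SetLike.mem_coe, LieHom.mem_ker, map_sub, map_add, map_smul, LieHom.map_lie, h0, h1,
      sub_sub, sub_eq_zero, lie_sl2U_lie_sl2U_sl2V, lie_sl2V_lie_sl2V_sl2U]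

end CommRing

section Field

variable {F : Type*} [Field F] {p : F}

theorem toSl2_surjective (h2 : (2 : F) ≠ 0) (hp0 : p ≠ 0) (hp1 : p ≠ 1) :
    Function.Surjective (toSl2 p) := by
  have hspan := (linearIndependent_sl2U_sl2V h2 hp0 hp1).span_eq_top_of_card_eq_finrank
    (by simp [finrank_sl_two])
  rw [← LieHom.range_eq_top, eq_top_iff]
  intro x _
  have hx : x ∈ Submodule.span F (Set.range ![sl2U F, sl2V p, ⁅sl2U F, sl2V p⁆]) :=
    hspan ▸ Submodule.mem_top
  refine Submodule.span_le.mpr ?_ hx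
  rw [← toSl2_comp_eq, Set.range_comp]
  rintro _ ⟨z, -, rfl⟩
  exact LieHom.mem_range_self _ _

theorem ker_toSl2 (h2 : (2 : F) ≠ 0) (hp0 : p ≠ 0) (hp1 : p ≠ 1) :
    (toSl2 p).ker = LieSubmodule.lieSpan F _ (relators (4 * (2 * p - 1)) 4) := by
  have hI := LieSubmodule.lieSpan_le.mpr (relators_subset_ker_toSl2 p)
  refine le_antisymm ?_ hI
  have hker := LinearMap.ker_le_of_linearIndependent_comp (toSl2 p).toLinearMap
    (p := (LieSubmodule.lieSpan F _ (relators (4 * (2 * p - 1)) 4)).toSubmodule)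
    (by rw [← LieHom.ker_toSubmodule]; exact hI)
    (span_mkHom_eq_top_of_relators_subset LieSubmodule.subset_lieSpan)
    (by rw [LieHom.coe_toLinearMap, toSl2_comp_eq]; exact linearIndependent_sl2U_sl2V h2 hp0 hp1)
  rwa [← LieHom.ker_toSubmodule] at hker

end Field

end FreeLieAlgebra

theorem stmt9_general (F : Type*) [Field F] (hchar : (2 : F) ≠ 0)
    (p : F) (hp0 : p ≠ 0) (hp1 : p ≠ 1) :
    ∀ (u v : FreeLieAlgebra F (Fin 2)), u = FreeLieAlgebra.of F 0 → v = FreeLieAlgebra.of F 1 →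
    ∀ I : LieIdeal F (FreeLieAlgebra F (Fin 2)),
      I = LieSubmodule.lieSpan F (FreeLieAlgebra F (Fin 2))
        {⁅u, ⁅u, v⁆⁆ - (4 * (2 * p - 1)) • u - (4 : F) • v,
         ⁅v, ⁅v, u⁆⁆ - (4 * (2 * p - 1)) • v - (4 : F) • u} →
      Nonempty ((FreeLieAlgebra F (Fin 2) ⧸ I) ≃ₗ⁅F⁆ sl (Fin 2) F) := by
  rintro u v rfl rfl I rfl
  exact ker_toSl2 hchar hp0 hp1 ▸
    ⟨(toSl2 p).quotKerEquivOfSurjective (toSl2_surjective hchar hp0 hp1)⟩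

/-- Fix `p ∈ F` with `p ≠ 0`, `p ≠ 1`.  The quotient of the free Lie algebra over `F` on two
generators `u, v` by the Lie ideal generated by `[u,[u,v]] − 4(2p−1)u − 4v` and
`[v,[v,u]] − 4(2p−1)v − 4u` is isomorphic to `sl₂(F)` as a Lie algebra over `F`. -/
theorem stmt9 (F : Type*) [Field F] [IsAlgClosed F] (hchar : (2 : F) ≠ 0)
    (p : F) (hp0 : p ≠ 0) (hp1 : p ≠ 1) :
    ∀ (u v : FreeLieAlgebra F (Fin 2)), u = FreeLieAlgebra.of F 0 → v = FreeLieAlgebra.of F 1 →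
    ∀ I : LieIdeal F (FreeLieAlgebra F (Fin 2)),
      I = LieSubmodule.lieSpan F (FreeLieAlgebra F (Fin 2))
        {⁅u, ⁅u, v⁆⁆ - (4 * (2 * p - 1)) • u - (4 : F) • v,
         ⁅v, ⁅v, u⁆⁆ - (4 * (2 * p - 1)) • v - (4 : F) • u} →
      Nonempty ((FreeLieAlgebra F (Fin 2) ⧸ I) ≃ₗ⁅F⁆ sl (Fin 2) F) :=
  stmt9_general F hchar p hp0 hp1
end

section
/- Fix p ∈ F with p ≠ 0 and p ≠ 1, and let a, a* ∈ L = sl₂(F) be the matrices a = [[1−2p, 2(1−p)],[2p, 2p−1]] and a* = [[1,0],[0,−1]], and let W = diag(1−p, p). Then the map L → L, y ↦ W yᵗ W⁻¹ is the unique antiautomorphism of L that fixes both a and a*. -/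
open Matrix LieAlgebra.SpecialLinear

/-!
The map `y ↦ W yᵀ W⁻¹` is transposition (an antiautomorphism of `sl n`) followed by conjugation
(an automorphism), and it fixes `y` exactly when `W yᵀ = y W`, a direct `2 × 2` check for `a` and
`a*`. For uniqueness: the equalizer of two antihomomorphisms is closed under brackets, so two
antiautomorphisms fixing `a` and `a*` agree on the Lie subalgebra they generate. Since `2 ≠ 0`,
`h = a*` together with any `x` with nonzero off-diagonal entries generates `sl₂`: the elements
`⁅h, ⁅h, x⁆⁆ ± 2 ⁅h, x⁆` are nonzero multiples of the two root vectors.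
-/

theorem LinearMap.ext_of_lieSpan_eq_top_of_antihom {R L M : Type*} [CommRing R] [LieRing L]
    [LieAlgebra R L] [LieRing M] [LieAlgebra R M] {f g : L →ₗ[R] M}
    (hf : ∀ x y, f ⁅x, y⁆ = ⁅f y, f x⁆) (hg : ∀ x y, g ⁅x, y⁆ = ⁅g y, g x⁆) {s : Set L}
    (hs : LieSubalgebra.lieSpan R L s = ⊤) (h : Set.EqOn f g s) : f = g := by
  let E : LieSubalgebra R L :=
    { LinearMap.eqLocus f g with
      lie_mem' := fun {x y} (hx : f x = g x) (hy : f y = g y) =>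
        show f ⁅x, y⁆ = g ⁅x, y⁆ by rw [hf, hg, hx, hy] }
  have hE : LieSubalgebra.lieSpan R L s ≤ E := LieSubalgebra.lieSpan_le.mpr h
  ext x
  exact hE (hs ▸ LieSubalgebra.mem_top x)

theorem Matrix.diag_one_neg_one_commutator {R : Type*} [CommRing R]
    (X : Matrix (Fin 2) (Fin 2) R) :
    !![1, 0; 0, -1] * X - X * !![1, 0; 0, -1] = !![0, 2 * X 0 1; -(2 * X 1 0), 0] := by
  ext i j
  fin_cases i <;> fin_cases j <;> simp [mul_apply, vecMul, dotProduct, Fin.sum_univ_two] <;> ring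

namespace LieAlgebra.SpecialLinear

section TransposeConj

variable {n R : Type*} [Fintype n] [DecidableEq n] [CommRing R]

theorem mem_sl_iff (A : Matrix n n R) : A ∈ sl n R ↔ A.trace = 0 := Iff.rfl

noncomputable def transposeConj (W : Matrix n n R) (hW : IsUnit W.det) : sl n R ≃ₗ[R] sl n R where
  toFun y := ⟨W * y.valᵀ * W⁻¹, by
    rw [mem_sl_iff, trace_mul_cycle, nonsing_inv_mul W hW, one_mul, trace_transpose]
    exact y.2⟩
  invFun y := ⟨(W⁻¹ * y.val * W)ᵀ, by
    rw [mem_sl_iff, trace_transpose, trace_mul_cycle, mul_nonsing_inv W hW, one_mul]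
    exact y.2⟩
  map_add' y z := Subtype.ext <| by simp [Matrix.mul_add, Matrix.add_mul]
  map_smul' c y := Subtype.ext <| by simp
  left_inv y := Subtype.ext <| by
    simp [nonsing_inv_mul_cancel_right _ _ hW, ← Matrix.mul_assoc, nonsing_inv_mul W hW]
  right_inv y := Subtype.ext <| by
    simp [mul_nonsing_inv_cancel_right _ _ hW, ← Matrix.mul_assoc, mul_nonsing_inv W hW]

variable (W : Matrix n n R) (hW : IsUnit W.det)

theorem coe_transposeConj (y : sl n R) : (transposeConj W hW y).val = W * y.valᵀ * W⁻¹ := rfl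

theorem transposeConj_lie (y z : sl n R) :
    transposeConj W hW ⁅y, z⁆ = ⁅transposeConj W hW z, transposeConj W hW y⁆ := by
  apply Subtype.ext
  simp only [sl_bracket, coe_transposeConj, transpose_sub, transpose_mul, Matrix.mul_sub,
    Matrix.sub_mul, Matrix.mul_assoc]
  simp [← Matrix.mul_assoc W⁻¹ W, nonsing_inv_mul W hW]

theorem transposeConj_eq_self_iff (y : sl n R) :
    transposeConj W hW y = y ↔ W * y.valᵀ = y.val * W := by
  rw [← Subtype.coe_inj, coe_transposeConj]
  have := W.invertibleOfIsUnitDet hW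
  exact mul_inv_eq_iff_eq_mul_of_invertible ..

end TransposeConj

theorem lieSpan_diag_pair_eq_top {K : Type*} [Field K] (h2 : (2 : K) ≠ 0)
    {h x : sl (Fin 2) K} (hh : h.val = !![1, 0; 0, -1]) (h01 : x.val 0 1 ≠ 0)
    (h10 : x.val 1 0 ≠ 0) :
    LieSubalgebra.lieSpan K (sl (Fin 2) K) {h, x} = ⊤ := by
  set S := LieSubalgebra.lieSpan K (sl (Fin 2) K) {h, x}
  have hS : h ∈ S := LieSubalgebra.subset_lieSpan (Set.mem_insert h {x})
  have uS : ⁅h, x⁆ ∈ S :=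
    S.lie_mem hS (LieSubalgebra.subset_lieSpan (Set.mem_insert_of_mem h rfl))
  have vS : ⁅h, ⁅h, x⁆⁆ ∈ S := S.lie_mem hS uS
  have hu : ⁅h, x⁆.val = !![0, 2 * x.val 0 1; -(2 * x.val 1 0), 0] := by
    rw [sl_bracket, hh, diag_one_neg_one_commutator]
  have hv : ⁅h, ⁅h, x⁆⁆.val = !![0, 4 * x.val 0 1; 4 * x.val 1 0, 0] := by
    rw [sl_bracket, hh, diag_one_neg_one_commutator, hu]
    ext i j
    fin_cases i <;> fin_cases j <;> simp <;> ring
  have h8 : (8 : K) ≠ 0 := by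
    rw [show (8 : K) = 2 ^ 3 by norm_num]
    exact pow_ne_zero _ h2
  refine eq_top_iff.mpr fun y _ => ?_
  have hy : y.val 1 1 = -y.val 0 0 := by
    have htr : y.val.trace = 0 := y.2
    rw [trace_fin_two] at htr
    linear_combination htr
  have hdecomp : y = y.val 0 0 • h
      + (y.val 0 1 / (8 * x.val 0 1)) • (⁅h, ⁅h, x⁆⁆ + (2 : K) • ⁅h, x⁆)
      + (y.val 1 0 / (8 * x.val 1 0)) • (⁅h, ⁅h, x⁆⁆ - (2 : K) • ⁅h, x⁆) := by
    ext i j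
    fin_cases i <;> fin_cases j <;> simp [hu, hv, hh, hy] <;> field_simp <;> ring
  rw [hdecomp]
  exact add_mem (add_mem (S.smul_mem _ hS) (S.smul_mem _ (add_mem vS (S.smul_mem _ uS))))
    (S.smul_mem _ (sub_mem vS (S.smul_mem _ uS)))

end LieAlgebra.SpecialLinear

theorem stmt10_general (F : Type*) [Field F] (hchar : (2 : F) ≠ 0)
    (p : F) (hp0 : p ≠ 0) (hp1 : p ≠ 1)
    (a as : sl (Fin 2) F)
    (ha : (a : Matrix (Fin 2) (Fin 2) F) = !![1 - 2 * p, 2 * (1 - p); 2 * p, 2 * p - 1])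
    (has : (as : Matrix (Fin 2) (Fin 2) F) = !![(1 : F), 0; 0, -1])
    (W : Matrix (Fin 2) (Fin 2) F)
    (hW : W = !![1 - p, 0; 0, p]) :
    ∃ σ : sl (Fin 2) F ≃ₗ[F] sl (Fin 2) F,
      (∀ y : sl (Fin 2) F,
          ((σ y : Matrix (Fin 2) (Fin 2) F)) = W * (y : Matrix (Fin 2) (Fin 2) F)ᵀ * W⁻¹) ∧
      (∀ y z : sl (Fin 2) F, σ ⁅y, z⁆ = ⁅σ z, σ y⁆) ∧
      σ a = a ∧ σ as = as ∧
      ∀ τ : sl (Fin 2) F ≃ₗ[F] sl (Fin 2) F,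
        (∀ y z : sl (Fin 2) F, τ ⁅y, z⁆ = ⁅τ z, τ y⁆) → τ a = a → τ as = as →
        ∀ y : sl (Fin 2) F, τ y = σ y := by
  have hp1' : 1 - p ≠ 0 := sub_ne_zero.mpr hp1.symm
  have hWdet : IsUnit W.det := by
    rw [hW, det_fin_two_of, mul_zero, sub_zero]
    exact (mul_ne_zero hp1' hp0).isUnit
  set σ := transposeConj W hWdet
  have hσa : σ a = a := by
    rw [transposeConj_eq_self_iff, ha, hW]
    ext i j
    fin_cases i <;> fin_cases j <;> simp [mul_apply, Fin.sum_univ_two] <;> ring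
  have hσas : σ as = as := by
    rw [transposeConj_eq_self_iff, has, hW]
    ext i j
    fin_cases i <;> fin_cases j <;> simp [mul_apply, Fin.sum_univ_two]
  refine ⟨σ, coe_transposeConj W hWdet, transposeConj_lie W hWdet, hσa, hσas,
    fun τ hτ hτa hτas => LinearMap.congr_fun ?_⟩
  have hgen : LieSubalgebra.lieSpan F (sl (Fin 2) F) {as, a} = ⊤ :=
    lieSpan_diag_pair_eq_top hchar has (by simp [ha, hp1', hchar]) (by simp [ha, hp0, hchar])
  refine LinearMap.ext_of_lieSpan_eq_top_of_antihom hτ (transposeConj_lie W hWdet) hgen ?_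
  rintro y (rfl | rfl)
  · exact hτas.trans hσas.symm
  · exact hτa.trans hσa.symm

/-- Fix `p ∈ F` with `p ≠ 0`, `p ≠ 1`.  Let `a = [[1−2p, 2(1−p)],[2p, 2p−1]]` and
`a* = diag(1,−1)` in `L = sl₂(F)`, and let `W = diag(1−p, p)`.  Then the map
`y ↦ W yᵗ W⁻¹` is the unique antiautomorphism of `L` fixing both `a` and `a*`:
there is an antiautomorphism `σ` of `L` given by `σ y = W yᵗ W⁻¹`, it fixes `a` and `a*`,
and any antiautomorphism of `L` fixing `a` and `a*` is equal to `σ`. -/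
theorem stmt10 (F : Type*) [Field F] [IsAlgClosed F] (hchar : (2 : F) ≠ 0)
    (p : F) (hp0 : p ≠ 0) (hp1 : p ≠ 1)
    (a as : sl (Fin 2) F)
    (ha : (a : Matrix (Fin 2) (Fin 2) F) = !![1 - 2 * p, 2 * (1 - p); 2 * p, 2 * p - 1])
    (has : (as : Matrix (Fin 2) (Fin 2) F) = !![(1 : F), 0; 0, -1])
    (W : Matrix (Fin 2) (Fin 2) F)
    (hW : W = !![1 - p, 0; 0, p]) :
    ∃ σ : sl (Fin 2) F ≃ₗ[F] sl (Fin 2) F,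
      (∀ y : sl (Fin 2) F,
          ((σ y : Matrix (Fin 2) (Fin 2) F)) = W * (y : Matrix (Fin 2) (Fin 2) F)ᵀ * W⁻¹) ∧
      (∀ y z : sl (Fin 2) F, σ ⁅y, z⁆ = ⁅σ z, σ y⁆) ∧
      σ a = a ∧ σ as = as ∧
      ∀ τ : sl (Fin 2) F ≃ₗ[F] sl (Fin 2) F,
        (∀ y z : sl (Fin 2) F, τ ⁅y, z⁆ = ⁅τ z, τ y⁆) → τ a = a → τ as = as →
        ∀ y : sl (Fin 2) F, τ y = σ y :=
  stmt10_general F hchar p hp0 hp1 a as ha has W hW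
end

section
/- (Krawtchouk orthogonality) For all n, m ∈ {0,1,…,N}: Σ_{i=0}^{N} K_n(i)·K_m(i)·C(N,i)·pⁱ·(1−p)^{N−i} = δ_{n,m}·C(N,n)⁻¹·((1−p)/p)ⁿ, where δ_{n,m} is the Kronecker delta and C(N,n) is invertible in F by feasibility of N. -/
open Finset

/-- The Krawtchouk polynomial value
`K_i(j) = Σ_{n=0}^{N} (−i)_n (−j)_n / ((−N)_n · n! · pⁿ)`, computed in the field `F`,
where `(α)_n` is the shifted factorial (ascending Pochhammer symbol). -/
noncomputable def kraw (F : Type*) [Field F] (p : F) (N i j : ℕ) : F :=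
  ∑ n ∈ Finset.range (N + 1),
    ((ascPochhammer F n).eval (-(i : F)) * (ascPochhammer F n).eval (-(j : F))) /
      ((ascPochhammer F n).eval (-(N : F)) * (n.factorial : F) * p ^ n)

/-!
The generating function `G_i(t) = Σ_n C(N,n) K_n(i) tⁿ` factors as
`(1 + (1 - p⁻¹) t)^i (1 + t)^(N - i)`. By the binomial theorem,
`Σ_i C(N,i) pⁱ (1-p)^(N-i) G_i(s) G_i(t)
  = (p (1 + (1 - p⁻¹) s) (1 + (1 - p⁻¹) t) + (1 - p) (1 + s) (1 + t))^N`,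
and the base simplifies to `1 + ((1 - p) / p) s t`. Comparing the coefficients of `sⁿ tᵐ`
(in `F[X][X]`, with `s = C X` and `t = X`) gives the orthogonality relations.
-/

open Polynomial

theorem ascPochhammer_eval_neg_natCast {R : Type*} [CommRing R] (n k : ℕ) :
    (ascPochhammer R k).eval (-(n : R)) = (-1) ^ k * (k.factorial * n.choose k) := by
  rw [ascPochhammer_eval_neg_eq_descPochhammer, descPochhammer_eval_eq_descFactorial,
    Nat.descFactorial_eq_factorial_mul_choose, Nat.cast_mul]

theorem natCast_factorial_ne_zero_of_le {F : Type*} [Field F] {N k : ℕ}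
    (hN : (N.factorial : F) ≠ 0) (hk : k ≤ N) : (k.factorial : F) ≠ 0 := by
  obtain ⟨c, hc⟩ := Nat.factorial_dvd_factorial hk
  exact left_ne_zero_of_mul (by rwa [hc, Nat.cast_mul] at hN)

theorem natCast_choose_ne_zero_of_le {F : Type*} [Field F] {N k : ℕ}
    (hN : (N.factorial : F) ≠ 0) (hk : k ≤ N) : (N.choose k : F) ≠ 0 := by
  rw [← Nat.choose_mul_factorial_mul_factorial hk, Nat.cast_mul, Nat.cast_mul] at hN
  exact left_ne_zero_of_mul (left_ne_zero_of_mul hN)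

theorem kraw_eq_sum_choose {F : Type*} [Field F] {N : ℕ} (hN : (N.factorial : F) ≠ 0)
    (p : F) (n i : ℕ) :
    kraw F p N n i = ∑ k ∈ range (N + 1),
      (-1) ^ k * n.choose k * i.choose k / (N.choose k * p ^ k) := by
  refine sum_congr rfl fun k hk => ?_
  have hk : (k.factorial : F) ≠ 0 :=
    natCast_factorial_ne_zero_of_le hN (Nat.lt_succ_iff.mp (mem_range.mp hk))
  simp only [ascPochhammer_eval_neg_natCast]
  field_simp

theorem sum_range_choose_mul_choose_mul_pow {R : Type*} [CommSemiring R] {N k : ℕ} (hk : k ≤ N)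
    (x : R) :
    ∑ n ∈ range (N + 1), (N.choose n * n.choose k : R) * x ^ n
      = N.choose k * x ^ k * (1 + x) ^ (N - k) := by
  rw [← sum_range_add_sum_Ico _ (by omega : k ≤ N + 1), sum_Ico_eq_sum_range,
    sum_eq_zero fun n hn => by simp [Nat.choose_eq_zero_of_lt (mem_range.mp hn)], zero_add,
    add_comm 1 x, add_pow, mul_sum, show N + 1 - k = N - k + 1 by omega]
  refine sum_congr rfl fun j hj => ?_
  rw [← Nat.cast_mul, Nat.choose_mul (Nat.le_add_right k j), Nat.add_sub_cancel_left]
  push_cast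
  ring

section GeneratingFunction

variable {F : Type*} [Field F] {A : Type*} [CommRing A] [Algebra F A]

noncomputable def krawGen (p : F) (N i : ℕ) (t : A) : A :=
  ∑ n ∈ range (N + 1), algebraMap F A (N.choose n * kraw F p N n i) * t ^ n

theorem krawGen_eq {N : ℕ} (hN : (N.factorial : F) ≠ 0) (p : F) {i : ℕ}
    (hi : i ≤ N) (t : A) :
    krawGen p N i t = (1 + algebraMap F A (1 - p⁻¹) * t) ^ i * (1 + t) ^ (N - i) := by
  have hsplit : 1 + algebraMap F A (1 - p⁻¹) * t = algebraMap F A (-p⁻¹) * t + (1 + t) := by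
    simp only [map_sub, map_one, map_neg]; ring
  calc krawGen p N i t
      = ∑ k ∈ range (N + 1), algebraMap F A ((-p⁻¹) ^ k * i.choose k / N.choose k) *
          ∑ n ∈ range (N + 1), (N.choose n * n.choose k : A) * t ^ n := by
        simp only [krawGen, kraw_eq_sum_choose hN, mul_sum, map_sum, sum_mul]
        rw [sum_comm]
        refine sum_congr rfl fun n _ => sum_congr rfl fun k _ => ?_
        rw [← map_natCast (algebraMap F A), ← map_natCast (algebraMap F A), ← map_mul,
          ← mul_assoc, ← map_mul]
        congr 2
        ring
    _ = ∑ k ∈ range (N + 1),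
          i.choose k * (algebraMap F A (-p⁻¹) * t) ^ k * (1 + t) ^ (N - k) := by
        refine sum_congr rfl fun k hk => ?_
        have hk : k ≤ N := Nat.lt_succ_iff.mp (mem_range.mp hk)
        have hC : (N.choose k : F) ≠ 0 := natCast_choose_ne_zero_of_le hN hk
        rw [sum_range_choose_mul_choose_mul_pow hk, ← map_natCast (algebraMap F A) (N.choose k),
          ← map_natCast (algebraMap F A) (i.choose k)]
        calc _ = algebraMap F A ((-p⁻¹) ^ k * i.choose k / N.choose k * N.choose k)
              * t ^ k * (1 + t) ^ (N - k) := by rw [map_mul]; ring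
          _ = _ := by rw [div_mul_cancel₀ _ hC, map_mul, map_pow]; ring
    _ = ∑ k ∈ range (i + 1),
          i.choose k * (algebraMap F A (-p⁻¹) * t) ^ k * (1 + t) ^ (N - k) :=
        (sum_subset (range_subset_range.2 (by omega)) fun k _ hk => by
          rw [mem_range, not_lt] at hk
          simp [Nat.choose_eq_zero_of_lt hk]).symm
    _ = _ := by
        rw [hsplit, add_pow, sum_mul]
        refine sum_congr rfl fun k hk => ?_
        rw [show N - k = (i - k) + (N - i) by have := mem_range.mp hk; omega, pow_add]
        ring

theorem sum_binomial_weight_mul_krawGen_mul_krawGen {N : ℕ} (hN : (N.factorial : F) ≠ 0)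
    {p : F} (hp : p ≠ 0) (s t : A) :
    ∑ i ∈ range (N + 1), algebraMap F A (N.choose i * p ^ i * (1 - p) ^ (N - i)) *
        krawGen p N i s * krawGen p N i t
      = (1 + algebraMap F A ((1 - p) / p) * s * t) ^ N := by
  have hcoeff : algebraMap F A p * (1 + algebraMap F A (1 - p⁻¹) * s) *
        (1 + algebraMap F A (1 - p⁻¹) * t)
      + algebraMap F A (1 - p) * ((1 + s) * (1 + t))
      = 1 + algebraMap F A ((1 - p) / p) * s * t := by
    have h₀ : p + (1 - p) = 1 := by ring
    have h₁ : p * (1 - p⁻¹) + (1 - p) = 0 := by field_simp; ring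
    have h₂ : p * (1 - p⁻¹) ^ 2 + (1 - p) = (1 - p) / p := by field_simp; ring
    have h₀' := congrArg (algebraMap F A) h₀
    have h₁' := congrArg (algebraMap F A) h₁
    have h₂' := congrArg (algebraMap F A) h₂
    simp only [map_add, map_mul, map_pow, map_zero, map_one] at h₀' h₁' h₂'
    linear_combination h₀' + (s + t) * h₁' + s * t * h₂'
  rw [← hcoeff, add_pow]
  refine sum_congr rfl fun i hi => ?_
  have hi : i ≤ N := Nat.lt_succ_iff.mp (mem_range.mp hi)
  rw [krawGen_eq hN p hi, krawGen_eq hN p hi, map_mul, map_mul, map_pow, map_pow, map_natCast]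
  simp only [mul_pow]
  ring

theorem sum_mul_krawGen_mul_krawGen (p : F) (N : ℕ) (w : ℕ → F) (s t : A) :
    ∑ i ∈ range (N + 1), algebraMap F A (w i) * krawGen p N i s * krawGen p N i t
      = ∑ n ∈ range (N + 1), ∑ m ∈ range (N + 1), algebraMap F A (N.choose n * N.choose m *
          ∑ i ∈ range (N + 1), kraw F p N n i * kraw F p N m i * w i) * s ^ n * t ^ m := by
  simp only [krawGen, mul_sum, sum_mul, map_sum, map_mul]
  rw [sum_congr rfl fun i _ => sum_comm, sum_comm]
  refine sum_congr rfl fun n _ => ?_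
  rw [sum_comm]
  exact sum_congr rfl fun m _ => sum_congr rfl fun i _ => by ring

end GeneratingFunction

theorem coeff_coeff_sum_sum_C_X_pow_mul_X_pow {R : Type*} [CommRing R] (c : ℕ → ℕ → R)
    {N n m : ℕ} (hn : n ≤ N) (hm : m ≤ N) :
    ((∑ a ∈ range (N + 1), ∑ b ∈ range (N + 1),
        algebraMap R R[X][X] (c a b) * C X ^ a * X ^ b).coeff m).coeff n = c n m := by
  have hterm : ∀ a b, algebraMap R R[X][X] (c a b) * C X ^ a * X ^ b
      = C (C (c a b) * X ^ a) * X ^ b := by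
    intro a b
    rw [Polynomial.algebraMap_apply, C_mul, C_pow]
    rfl
  simp only [hterm, finsetSum_coeff, coeff_C_mul_X_pow, sum_ite_eq, mem_range, Nat.lt_succ_iff, hm,
    hn, if_true]

theorem coeff_coeff_one_add_C_mul_C_X_mul_X_pow {R : Type*} [CommRing R] (r : R) {N m : ℕ}
    (hm : m ≤ N) (n : ℕ) :
    (((1 + algebraMap R R[X][X] r * C X * X) ^ N).coeff m).coeff n
      = if n = m then N.choose n * r ^ n else 0 := by
  have hterm : ∀ k, (algebraMap R R[X][X] r * C X * X) ^ k * 1 ^ (N - k) * (N.choose k : R[X][X])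
      = C (C (N.choose k * r ^ k) * X ^ k) * X ^ k := by
    intro k
    rw [Polynomial.algebraMap_apply, Polynomial.algebraMap_apply, Algebra.algebraMap_self,
      RingHom.id_apply]
    simp only [map_mul, map_pow, map_natCast, one_pow, mul_one]
    ring
  rw [add_comm, add_pow]
  simp only [hterm, finsetSum_coeff, coeff_C_mul_X_pow, sum_ite_eq, mem_range, Nat.lt_succ_iff, hm,
    if_true]
  split_ifs with h <;> simp only [h]

theorem stmt12_general (F : Type*) [Field F]
    (N : ℕ) (hN : (N.factorial : F) ≠ 0)
    (p : F) (hp0 : p ≠ 0)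
    (n m : ℕ) (hn : n ≤ N) (hm : m ≤ N) :
    ∑ i ∈ Finset.range (N + 1),
        kraw F p N n i * kraw F p N m i * (N.choose i : F) * p ^ i * (1 - p) ^ (N - i)
      = (if n = m then 1 else 0) * ((N.choose n : F))⁻¹ * ((1 - p) / p) ^ n := by
  have hgen := sum_binomial_weight_mul_krawGen_mul_krawGen hN hp0 (C X : F[X][X]) X
  rw [sum_mul_krawGen_mul_krawGen] at hgen
  have hcoeff := congrArg (fun f => (f.coeff m).coeff n) hgen
  simp only [coeff_coeff_sum_sum_C_X_pow_mul_X_pow _ hn hm,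
    coeff_coeff_one_add_C_mul_C_X_mul_X_pow _ hm, ← mul_assoc] at hcoeff
  have hCn := natCast_choose_ne_zero_of_le hN hn
  refine mul_left_cancel₀ (mul_ne_zero hCn (natCast_choose_ne_zero_of_le hN hm)) ?_
  rw [hcoeff]
  split_ifs with h
  · subst h
    field_simp
  · ring

/-- Krawtchouk orthogonality: for `0 ≤ n, m ≤ N`,
`Σ_{i=0}^{N} K_n(i) K_m(i) C(N,i) pⁱ (1−p)^{N−i} = δ_{nm} C(N,n)⁻¹ ((1−p)/p)ⁿ`.
Feasibility of `N` is encoded by `(N! : F) ≠ 0`. -/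
theorem stmt12 (F : Type*) [Field F] (hchar : (2 : F) ≠ 0)
    (N : ℕ) (hN : (N.factorial : F) ≠ 0)
    (p : F) (hp0 : p ≠ 0) (hp1 : p ≠ 1)
    (n m : ℕ) (hn : n ≤ N) (hm : m ≤ N) :
    ∑ i ∈ Finset.range (N + 1),
        kraw F p N n i * kraw F p N m i * (N.choose i : F) * p ^ i * (1 - p) ^ (N - i)
      = (if n = m then 1 else 0) * ((N.choose n : F))⁻¹ * ((1 - p) / p) ^ n :=
  stmt12_general F N hN p hp0 n m hn hm
end

section
/- Let F be a field, N ≥ 0 an integer, and let A ∈ Mat_{N+1}(F) be irreducible tridiagonal. Let E ∈ Mat_{N+1}(F) be the matrix whose (0,0)-entry is 1 and all other entries are 0. Then the (N+1)² matrices A^r·E·A^s for r,s ∈ {0,1,…,N} form a basis of the F-vector space Mat_{N+1}(F). -/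
open Matrix

/-- A square matrix (rows and columns indexed by `Fin (N+1)`) is irreducible tridiagonal
if its `(i,j)`-entry is zero whenever `|i−j| > 1` and nonzero whenever `|i−j| = 1`. -/
def IsIrredTridiagonal {F : Type*} [Field F] {n : ℕ}
    (A : Matrix (Fin n) (Fin n) F) : Prop :=
  (∀ i j : Fin n, ((i : ℕ) + 1 < (j : ℕ) ∨ (j : ℕ) + 1 < (i : ℕ)) → A i j = 0) ∧
  (∀ i j : Fin n, ((i : ℕ) + 1 = (j : ℕ) ∨ (j : ℕ) + 1 = (i : ℕ)) → A i j ≠ 0)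

/-!
Write `K` for the Krylov matrix of `A` at `e₀`, whose `r`-th column is `A ^ r e₀`. Then
`A ^ r E A ^ s = K * single r s 1 * Lᵀ`, where `L` is the Krylov matrix of `Aᵀ`, so the family
is the image of the standard basis under `X ↦ K X Lᵀ`. Since `A` is tridiagonal, `A ^ r e₀` is
supported on `{0, …, r}`, and its `r`-th entry is a product of subdiagonal entries of `A`, hence
nonzero. So `K` and `L` are triangular with nonzero diagonal, and `X ↦ K X Lᵀ` is invertible.
-/

namespace Matrix

variable {n R : Type*} [Fintype n] [DecidableEq n]

theorem mul_single_mul_apply [Semiring R] (X Y : Matrix n n R) (a b i j : n) (c : R) :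
    (X * single a b c * Y) i j = X i a * c * Y b j := by
  rw [mul_apply, Finset.sum_eq_single b (fun k _ hk => by simp [hk]) (by simp),
    mul_single_apply_same]

variable [CommSemiring R]

noncomputable def stdBasisMulMul (U V : (Matrix n n R)ˣ) : Module.Basis (n × n) R (Matrix n n R) :=
  (stdBasis R n n).map ((U.mulLeftLinearEquiv R _).trans (V.mulRightLinearEquiv R))

@[simp]
theorem stdBasisMulMul_apply (U V : (Matrix n n R)ˣ) (rs : n × n) :
    stdBasisMulMul U V rs = (U : Matrix n n R) * single rs.1 rs.2 1 * (V : Matrix n n R) := by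
  simp [stdBasisMulMul, ← stdBasis_eq_single]

end Matrix

def krylovMatrix {R : Type*} [Semiring R] {n : ℕ} (A : Matrix (Fin (n + 1)) (Fin (n + 1)) R) :
    Matrix (Fin (n + 1)) (Fin (n + 1)) R :=
  of fun i r => (A ^ (r : ℕ)) i 0

theorem pow_mul_single_zero_mul_pow {R : Type*} [CommSemiring R] {n : ℕ}
    (A : Matrix (Fin (n + 1)) (Fin (n + 1)) R) (r s : Fin (n + 1)) :
    A ^ (r : ℕ) * single 0 0 1 * A ^ (s : ℕ) =
      krylovMatrix A * single r s 1 * (krylovMatrix Aᵀ)ᵀ := by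
  ext i j
  simp [mul_single_mul_apply, krylovMatrix, ← transpose_pow]

namespace IsIrredTridiagonal

variable {F : Type*} [Field F] {n : ℕ} {A : Matrix (Fin n) (Fin n) F}

theorem transpose (hA : IsIrredTridiagonal A) : IsIrredTridiagonal Aᵀ :=
  ⟨fun i j h => hA.1 j i h.symm, fun i j h => hA.2 j i h.symm⟩

theorem pow_apply_eq_zero_of_lt (hA : IsIrredTridiagonal A) {r : ℕ} {i j : Fin n}
    (h : (j : ℕ) + r < i) : (A ^ r) i j = 0 := by
  induction r generalizing i with
  | zero => exact one_apply_ne (Fin.ne_of_gt (by simpa using h))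
  | succ r ih =>
    rw [pow_succ', mul_apply]
    refine Finset.sum_eq_zero fun k _ => ?_
    rcases lt_or_ge ((k : ℕ) + 1) i with hk | hk
    · rw [hA.1 i k (Or.inr hk), zero_mul]
    · rw [ih (by omega), mul_zero]

theorem pow_apply_ne_zero (hA : IsIrredTridiagonal A) {r : ℕ} {i j : Fin n}
    (h : (i : ℕ) = j + r) : (A ^ r) i j ≠ 0 := by
  induction r generalizing i with
  | zero => simp [Fin.ext (by simpa using h)]
  | succ r ih =>
    let k : Fin n := ⟨j + r, by omega⟩
    rw [pow_succ', mul_apply, Finset.sum_eq_single k]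
    · exact mul_ne_zero (hA.2 i k (Or.inr (by simp only [k]; omega))) (ih rfl)
    · intro k' _ hk'
      rcases lt_or_gt_of_ne (Fin.val_ne_of_ne hk') with hlt | hgt
      · rw [hA.1 i k' (Or.inr (by simp only [k] at hlt; omega)), zero_mul]
      · rw [hA.pow_apply_eq_zero_of_lt hgt, mul_zero]
    · simp

end IsIrredTridiagonal

theorem IsIrredTridiagonal.isUnit_krylovMatrix {F : Type*} [Field F] {n : ℕ}
    {A : Matrix (Fin (n + 1)) (Fin (n + 1)) F} (hA : IsIrredTridiagonal A) :
    IsUnit (krylovMatrix A) := by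
  have hupper : (krylovMatrix A).IsUpperTriangular := fun i r hri =>
    hA.pow_apply_eq_zero_of_lt (by simpa using hri)
  rw [isUnit_iff_isUnit_det, det_of_isUpperTriangular hupper, IsUnit.prod_iff]
  exact fun r _ => (hA.pow_apply_ne_zero (by simp)).isUnit

/-- Let `A ∈ Mat_{N+1}(F)` be irreducible tridiagonal and let `E` be the matrix with
`(0,0)`-entry `1` and all other entries `0`.  Then the `(N+1)²` matrices `A^r E A^s`
for `0 ≤ r, s ≤ N` form a basis of `Mat_{N+1}(F)`. -/
theorem stmt17 (F : Type*) [Field F] (N : ℕ)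
    (A : Matrix (Fin (N + 1)) (Fin (N + 1)) F) (hA : IsIrredTridiagonal A)
    (E : Matrix (Fin (N + 1)) (Fin (N + 1)) F)
    (hE : E = Matrix.single 0 0 (1 : F)) :
    LinearIndependent F
      (fun rs : Fin (N + 1) × Fin (N + 1) => A ^ (rs.1 : ℕ) * E * A ^ (rs.2 : ℕ)) ∧
    Submodule.span F
      (Set.range fun rs : Fin (N + 1) × Fin (N + 1) => A ^ (rs.1 : ℕ) * E * A ^ (rs.2 : ℕ))
      = ⊤ := by
  obtain ⟨K, hK⟩ := hA.isUnit_krylovMatrix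
  obtain ⟨L, hL⟩ := (isUnit_transpose _).mpr hA.transpose.isUnit_krylovMatrix
  have hfamily : (fun rs : Fin (N + 1) × Fin (N + 1) => A ^ (rs.1 : ℕ) * E * A ^ (rs.2 : ℕ)) =
      stdBasisMulMul K L := by
    ext1 rs
    rw [stdBasisMulMul_apply, hK, hL, hE, pow_mul_single_zero_mul_pow]
  rw [hfamily]
  exact ⟨(stdBasisMulMul K L).linearIndependent, (stdBasisMulMul K L).span_eq⟩
end

section
/- Let A, A* be a Leonard pair on V. Then each of A and A* is multiplicity-free: it is diagonalizable and each of its eigenspaces has dimension one. -/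
open Matrix

/-- A pair of linear maps `A, A* : V → V` is a Leonard pair when there is a basis in which
`A` is represented by an irreducible tridiagonal matrix and `A*` by a diagonal one, and a
basis in which `A` is represented by a diagonal matrix and `A*` by an irreducible
tridiagonal one. -/
def IsLeonardPair {F V : Type*} [Field F] [AddCommGroup V] [Module F V] {N : ℕ}
    (_ : Module.finrank F V = N + 1) (A As : V →ₗ[F] V) : Prop :=
  (∃ b : Module.Basis (Fin (N + 1)) F V,
      IsIrredTridiagonal (LinearMap.toMatrix b b A) ∧
      (LinearMap.toMatrix b b As).IsDiag) ∧
  (∃ c : Module.Basis (Fin (N + 1)) F V,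
      (LinearMap.toMatrix c c A).IsDiag ∧
      IsIrredTridiagonal (LinearMap.toMatrix c c As))

/-- An endomorphism is multiplicity-free when it is diagonalizable (its eigenspaces span)
and each of its eigenspaces has dimension one. -/
def IsMultiplicityFree {F V : Type*} [Field F] [AddCommGroup V] [Module F V]
    (A : V →ₗ[F] V) : Prop :=
  ((⨆ μ : F, Module.End.eigenspace A μ) = ⊤) ∧
  (∀ μ : F, Module.End.HasEigenvalue A μ →
    Module.finrank F (Module.End.eigenspace A μ) = 1)

/-! In a basis in which `A` is irreducible tridiagonal, an eigenvector is determined by its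
first coordinate: once it vanishes up to index `k`, row `k` of the eigenvalue equation reads
`T k (k+1) * x (k+1) = 0` with `T k (k+1) ≠ 0`. Hence every eigenspace has dimension at most one.
A basis in which `A` is diagonal consists of eigenvectors, so the eigenspaces span `V`. A Leonard
pair provides both kinds of bases for `A` and, with the roles exchanged, for `A*`. -/

open Module

theorem IsIrredTridiagonal.eq_zero_of_mulVec_eq_smul {F : Type*} [Field F] {n : ℕ}
    {T : Matrix (Fin (n + 1)) (Fin (n + 1)) F} (hT : IsIrredTridiagonal T) {μ : F}
    {x : Fin (n + 1) → F} (hx : T *ᵥ x = μ • x) (h0 : x 0 = 0) : x = 0 := by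
  have hvanish : ∀ k : ℕ, ∀ i : Fin (n + 1), (i : ℕ) ≤ k → x i = 0 := by
    intro k
    induction k with
    | zero =>
      intro i hi
      rwa [show i = 0 from Fin.ext (Nat.le_zero.mp hi)]
    | succ k ih =>
      intro i hi
      rcases Nat.lt_or_ge (i : ℕ) (k + 1) with hlt | hge
      · exact ih i (by omega)
      set r : Fin (n + 1) := ⟨k, by omega⟩
      have hrow : ∑ j, T r j * x j = T r i * x i := by
        refine Finset.sum_eq_single i (fun j _ hji => ?_) (by simp)
        rcases Nat.lt_or_ge (j : ℕ) (k + 1) with hj | hj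
        · rw [ih j (by omega), mul_zero]
        · have hji_val : (j : ℕ) ≠ i := Fin.val_ne_of_ne hji
          rw [hT.1 r j (Or.inl (by simp only [r]; omega)), zero_mul]
      have hrow_zero : ∑ j, T r j * x j = 0 := by
        have := congrFun hx r
        rwa [Pi.smul_apply, ih r le_rfl, smul_zero] at this
      have hsuper : T r i ≠ 0 := hT.2 r i (Or.inl (by simp only [r]; omega))
      exact (mul_eq_zero.mp (hrow ▸ hrow_zero)).resolve_left hsuper
  exact funext fun i => hvanish i i le_rfl

theorem finrank_eigenspace_le_one_of_isIrredTridiagonal {F V : Type*} [Field F]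
    [AddCommGroup V] [Module F V] {n : ℕ} (A : V →ₗ[F] V) (b : Basis (Fin (n + 1)) F V)
    (hb : IsIrredTridiagonal (LinearMap.toMatrix b b A)) (μ : F) :
    finrank F (End.eigenspace A μ) ≤ 1 := by
  let firstCoord : End.eigenspace A μ →ₗ[F] F :=
    (Finsupp.lapply 0).comp (b.repr.toLinearMap.comp (End.eigenspace A μ).subtype)
  have hinj : Function.Injective firstCoord := by
    rw [← LinearMap.ker_eq_bot, LinearMap.ker_eq_bot']
    intro v hv
    have hmulVec : LinearMap.toMatrix b b A *ᵥ b.repr v = μ • ⇑(b.repr v) := by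
      rw [LinearMap.toMatrix_mulVec_repr, End.mem_eigenspace_iff.mp v.2, map_smul,
        Finsupp.coe_smul]
    have hrepr := hb.eq_zero_of_mulVec_eq_smul hmulVec hv
    exact Subtype.ext (b.repr.map_eq_zero_iff.mp (Finsupp.coe_eq_zero.mp hrepr))
  calc finrank F (End.eigenspace A μ) ≤ finrank F F :=
        LinearMap.finrank_le_finrank_of_injective hinj
    _ = 1 := finrank_self F

theorem Module.Basis.apply_eq_smul_of_isDiag_toMatrix {F V : Type*} [Field F]
    [AddCommGroup V] [Module F V] {ι : Type*} [Fintype ι] [DecidableEq ι]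
    (A : V →ₗ[F] V) (c : Basis ι F V) (hc : (LinearMap.toMatrix c c A).IsDiag) (j : ι) :
    A (c j) = LinearMap.toMatrix c c A j j • c j := by
  refine c.ext_elem fun i => ?_
  rw [← LinearMap.toMatrix_apply, map_smul, c.repr_self, Finsupp.smul_apply,
    Finsupp.single_apply]
  by_cases hij : j = i
  · subst hij; simp
  · rw [if_neg hij, hc (Ne.symm hij), smul_zero]

theorem iSup_eigenspace_eq_top_of_isDiag_toMatrix {F V : Type*} [Field F]
    [AddCommGroup V] [Module F V] {ι : Type*} [Fintype ι] [DecidableEq ι]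
    (A : V →ₗ[F] V) (c : Basis ι F V) (hc : (LinearMap.toMatrix c c A).IsDiag) :
    ⨆ μ : F, End.eigenspace A μ = ⊤ := by
  refine eq_top_iff.mpr (c.span_eq ▸ Submodule.span_le.mpr ?_)
  rintro _ ⟨j, rfl⟩
  exact Submodule.mem_iSup_of_mem _
    (End.mem_eigenspace_iff.mpr (c.apply_eq_smul_of_isDiag_toMatrix A hc j))

theorem isMultiplicityFree_of_isIrredTridiagonal_of_isDiag {F V : Type*} [Field F]
    [AddCommGroup V] [Module F V] {n : ℕ} (A : V →ₗ[F] V) (b c : Basis (Fin (n + 1)) F V)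
    (hb : IsIrredTridiagonal (LinearMap.toMatrix b b A))
    (hc : (LinearMap.toMatrix c c A).IsDiag) :
    IsMultiplicityFree A := by
  have : FiniteDimensional F V := Module.Finite.of_basis b
  refine ⟨iSup_eigenspace_eq_top_of_isDiag_toMatrix A c hc, fun μ hμ => ?_⟩
  exact le_antisymm (finrank_eigenspace_le_one_of_isIrredTridiagonal A b hb μ)
    (Submodule.one_le_finrank_iff.mpr (End.hasEigenvalue_iff.mp hμ))

/-- If `A, A*` is a Leonard pair on `V`, then each of `A` and `A*` is multiplicity-free. -/
theorem stmt18 (F V : Type*) [Field F] [AddCommGroup V] [Module F V]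
    (N : ℕ) (hdim : Module.finrank F V = N + 1)
    (A As : V →ₗ[F] V) (h : IsLeonardPair hdim A As) :
    IsMultiplicityFree A ∧ IsMultiplicityFree As := by
  obtain ⟨⟨b, hbA, hbAs⟩, ⟨c, hcA, hcAs⟩⟩ := h
  exact ⟨isMultiplicityFree_of_isIrredTridiagonal_of_isDiag A b c hbA hcA,
    isMultiplicityFree_of_isIrredTridiagonal_of_isDiag As c b hcAs hbAs⟩
end
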